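/- arXiv:2206.14666 — 2 statements merged into one kernel-verified Lean document; each statement's English description precedes it below -/
import Mathlib

section
/- Let (Ω, 𝔉, P) be a probability space, α ∈ (0,1), and let Y be an integrable real-valued random variable. Then for every λ ∈ ℝ, CVaR_α(Y) ≤ λ + (1/(1−α)) E[(Y − λ)₊], and equality holds for λ = VaR_α(Y); i.e. CVaR_α(Y) = VaR_α(Y) + (1/(1−α)) E[(Y − VaR_α(Y))₊] = min_{λ ∈ ℝ} { λ + (1/(1−α)) E[(Y − λ)₊] }. -/
open MeasureTheory

/-- Value-at-risk at level `α` of the loss `X`: the `α`-quantile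
`VaR_α(X) = inf {x : P(X ≤ x) ≥ α}`. -/
noncomputable def VaR {Ω : Type*} [MeasurableSpace Ω] (P : Measure Ω) (X : Ω → ℝ) (α : ℝ) : ℝ :=
  sInf {x : ℝ | α ≤ (P {ω | X ω ≤ x}).toReal}

/-- Conditional value-at-risk: `CVaR_α(X) = (1-α)⁻¹ ∫_α^1 VaR_u(X) du`. -/
noncomputable def CVaR {Ω : Type*} [MeasurableSpace Ω] (P : Measure Ω) (X : Ω → ℝ) (α : ℝ) : ℝ :=
  (1 - α)⁻¹ * ∫ u in α..1, VaR P X u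

/-!
`VaR_u(Y)` is the quantile function `q` of the law `μ` of `Y`, and under Lebesgue measure on
`(0, 1)` the function `q` has law `μ`, so `E[g(Y)] = ∫₀¹ g(q u) du`. Hence
`(1 - α) CVaR_α(Y) = ∫_α^1 q = (1 - α) λ + ∫_α^1 (q - λ) ≤ (1 - α) λ + ∫_0^1 (q - λ)₊`.
As `q` is nondecreasing, `(q - q(α))₊` vanishes on `(0, α]` and equals `q - q(α)` on `(α, 1)`,
so both inequalities are equalities at `λ = q(α) = VaR_α(Y)`.
-/

open ProbabilityTheory Filter Set

namespace ProbabilityTheory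

/-- Meaningful only for `u ∈ (0, 1)`: at `u ≤ 0` and (possibly) at `u = 1` it is the `sInf` of
an unbounded or empty set, i.e. the junk value `0`. -/
noncomputable def quantile (μ : Measure ℝ) (u : ℝ) : ℝ := sInf {x | u ≤ cdf μ x}

variable (μ : Measure ℝ)

lemma nonempty_setOf_le_cdf {u : ℝ} (hu : u < 1) : {x : ℝ | u ≤ cdf μ x}.Nonempty :=
  ((tendsto_cdf_atTop (μ := μ)).eventually (eventually_ge_nhds hu)).exists

lemma bddBelow_setOf_le_cdf {u : ℝ} (hu : 0 < u) : BddBelow {x : ℝ | u ≤ cdf μ x} := by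
  obtain ⟨x₀, hx₀⟩ := ((tendsto_cdf_atBot (μ := μ)).eventually (eventually_lt_nhds hu)).exists
  refine ⟨x₀, fun y hy => ?_⟩
  by_contra! hyx
  exact (hy.trans (monotone_cdf μ hyx.le)).not_gt hx₀

lemma le_cdf_quantile {u : ℝ} (hu : u ∈ Ioo 0 1) : u ≤ cdf μ (quantile μ u) := by
  refine ge_of_tendsto (((cdf μ).right_continuous _).mono Ioi_subset_Ici_self) ?_
  filter_upwards [self_mem_nhdsWithin] with x hx
  obtain ⟨y, hy, hyx⟩ := exists_lt_of_csInf_lt (nonempty_setOf_le_cdf μ hu.2) hx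
  exact hy.trans (monotone_cdf μ hyx.le)

lemma quantile_le_iff {u : ℝ} (hu : u ∈ Ioo 0 1) (x : ℝ) : quantile μ u ≤ x ↔ u ≤ cdf μ x :=
  ⟨fun h => (le_cdf_quantile μ hu).trans (monotone_cdf μ h),
    fun h => csInf_le (bddBelow_setOf_le_cdf μ hu.1) h⟩

lemma monotoneOn_quantile : MonotoneOn (quantile μ) (Ioo 0 1) := fun _ hu _ hv huv =>
  csInf_le_csInf (bddBelow_setOf_le_cdf μ hu.1) (nonempty_setOf_le_cdf μ hv.2)
    fun _ hx => huv.trans hx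

lemma aemeasurable_quantile : AEMeasurable (quantile μ) (volume.restrict (Ioo 0 1)) :=
  aemeasurable_restrict_of_monotoneOn measurableSet_Ioo (monotoneOn_quantile μ)

variable [IsProbabilityMeasure μ]

lemma map_quantile : (volume.restrict (Ioo 0 1)).map (quantile μ) = μ := by
  refine (Measure.ext_of_Iic _ _ fun x => ?_).symm
  have hpre : quantile μ ⁻¹' Iic x ∩ Ioo 0 1 = Iic (cdf μ x) ∩ Ioo 0 1 := by
    ext u
    simp only [mem_inter_iff, mem_preimage, mem_Iic, and_congr_left_iff]
    exact fun hu => quantile_le_iff μ hu x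
  rw [Measure.map_apply_of_aemeasurable (aemeasurable_quantile μ) measurableSet_Iic,
    Measure.restrict_apply' measurableSet_Ioo, hpre, inter_comm,
    measure_congr (ae_eq_set_inter (Ioo_ae_eq_Ioc (μ := volume)) (ae_eq_refl (Iic _))),
    Ioc_inter_Iic, min_eq_right (cdf_le_one μ x), Real.volume_Ioc, sub_zero, ofReal_cdf]

lemma integral_eq_intervalIntegral_quantile {g : ℝ → ℝ} (hg : AEStronglyMeasurable g μ) :
    ∫ x, g x ∂μ = ∫ u in 0..1, g (quantile μ u) := by
  rw [intervalIntegral.integral_of_le zero_le_one, integral_Ioc_eq_integral_Ioo]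
  conv_lhs => rw [← map_quantile μ]
  rw [← map_quantile μ] at hg
  exact integral_map (aemeasurable_quantile μ) hg

lemma intervalIntegrable_quantile (hμ : Integrable id μ) :
    IntervalIntegrable (quantile μ) volume 0 1 := by
  rw [← map_quantile μ, integrable_map_measure aestronglyMeasurable_id
    (aemeasurable_quantile μ)] at hμ
  exact (intervalIntegrable_iff_integrableOn_Ioo_of_le zero_le_one).2 hμ

end ProbabilityTheory

lemma VaR_eq_quantile_map {Ω : Type*} [MeasurableSpace Ω] {P : Measure Ω} [IsProbabilityMeasure P]
    {Y : Ω → ℝ} (hY : AEMeasurable Y P) (u : ℝ) : VaR P Y u = quantile (P.map Y) u := by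
  have : IsProbabilityMeasure (P.map Y) := Measure.isProbabilityMeasure_map hY
  simp only [VaR, quantile, cdf_eq_real, measureReal_def,
    Measure.map_apply_of_aemeasurable hY measurableSet_Iic]
  rfl

section

variable {q : ℝ → ℝ} {α : ℝ}

lemma intervalIntegral_eq_mul_add_intervalIntegral_sub {a b : ℝ}
    (hq : IntervalIntegrable q volume a b) (l : ℝ) :
    ∫ u in a..b, q u = (b - a) * l + ∫ u in a..b, (q u - l) := by
  rw [intervalIntegral.integral_sub hq intervalIntegrable_const, intervalIntegral.integral_const,
    smul_eq_mul]
  ring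

lemma IntervalIntegrable.max_sub_const_zero {a b : ℝ} (hq : IntervalIntegrable q volume a b)
    (l : ℝ) : IntervalIntegrable (fun u => max (q u - l) 0) volume a b :=
  intervalIntegrable_iff.2 (intervalIntegrable_iff.1 (hq.sub intervalIntegrable_const)).pos_part

lemma intervalIntegral_le_add_intervalIntegral_max_sub (hq : IntervalIntegrable q volume 0 1)
    (hα : α ∈ Icc (0 : ℝ) 1) (l : ℝ) :
    ∫ u in α..1, q u ≤ (1 - α) * l + ∫ u in 0..1, max (q u - l) 0 := by
  have hα' : α ∈ uIcc 0 1 := by rwa [uIcc_of_le zero_le_one]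
  have hqα : IntervalIntegrable q volume α 1 := hq.mono_set (uIcc_subset_uIcc_right hα')
  have hpos := hq.max_sub_const_zero l
  calc ∫ u in α..1, q u = (1 - α) * l + ∫ u in α..1, (q u - l) :=
        intervalIntegral_eq_mul_add_intervalIntegral_sub hqα l
    _ ≤ (1 - α) * l + ∫ u in α..1, max (q u - l) 0 := by
        gcongr
        exact intervalIntegral.integral_mono_on hα.2 (hqα.sub intervalIntegrable_const)
          (hqα.max_sub_const_zero l) fun u _ => le_max_left _ _
    _ ≤ (1 - α) * l + ∫ u in 0..1, max (q u - l) 0 := by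
        rw [← intervalIntegral.integral_add_adjacent_intervals
          (hpos.mono_set (uIcc_subset_uIcc_left hα')) (hqα.max_sub_const_zero l)]
        have : 0 ≤ ∫ u in 0..α, max (q u - l) 0 :=
          intervalIntegral.integral_nonneg hα.1 fun u _ => le_max_right _ _
        linarith

lemma intervalIntegral_eq_add_intervalIntegral_max_sub_of_monotoneOn
    (hq : IntervalIntegrable q volume 0 1) (hmono : MonotoneOn q (Ioo 0 1))
    (hα : α ∈ Ioo (0 : ℝ) 1) :
    ∫ u in α..1, q u = (1 - α) * q α + ∫ u in 0..1, max (q u - q α) 0 := by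
  have hα' : α ∈ uIcc 0 1 := by rw [uIcc_of_le zero_le_one]; exact Ioo_subset_Icc_self hα
  have hqα : IntervalIntegrable q volume α 1 := hq.mono_set (uIcc_subset_uIcc_right hα')
  have hpos := hq.max_sub_const_zero (q α)
  have below : ∫ u in 0..α, max (q u - q α) 0 = 0 := by
    refine (intervalIntegral.integral_congr_ae (Eventually.of_forall fun u hu => ?_)).trans
      intervalIntegral.integral_zero
    rw [uIoc_of_le hα.1.le] at hu
    exact max_eq_right (sub_nonpos.2 (hmono ⟨hu.1, hu.2.trans_lt hα.2⟩ hα hu.2))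
  have above : ∫ u in α..1, max (q u - q α) 0 = ∫ u in α..1, (q u - q α) := by
    refine intervalIntegral.integral_congr_ae ?_
    filter_upwards [Measure.ae_ne volume 1] with u hu1 hu
    rw [uIoc_of_le hα.2.le] at hu
    exact max_eq_left (sub_nonneg.2 (hmono hα ⟨hα.1.trans hu.1, hu.2.lt_of_ne hu1⟩ hu.1.le))
  rw [← intervalIntegral.integral_add_adjacent_intervals
    (hpos.mono_set (uIcc_subset_uIcc_left hα')) (hqα.max_sub_const_zero _), below, above,
    zero_add]
  exact intervalIntegral_eq_mul_add_intervalIntegral_sub hqα _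

end

theorem cvar_rockafellar_uryasev_general {Ω : Type*} [MeasurableSpace Ω] (P : Measure Ω)
    [IsProbabilityMeasure P] (α : ℝ) (hα : α ∈ Set.Ioo (0:ℝ) 1)
    (Y : Ω → ℝ) (hY : Integrable Y P) :
    (∀ l : ℝ, CVaR P Y α ≤ l + (1 - α)⁻¹ * ∫ ω, max (Y ω - l) 0 ∂P) ∧
    CVaR P Y α = VaR P Y α + (1 - α)⁻¹ * ∫ ω, max (Y ω - VaR P Y α) 0 ∂P := by
  set μ := P.map Y
  have : IsProbabilityMeasure μ := Measure.isProbabilityMeasure_map hY.aemeasurable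
  have hVaR : VaR P Y = quantile μ := funext (VaR_eq_quantile_map hY.aemeasurable)
  have hq : IntervalIntegrable (quantile μ) volume 0 1 := intervalIntegrable_quantile μ <|
    (integrable_map_measure aestronglyMeasurable_id hY.aemeasurable).2 hY
  have hE (l : ℝ) : ∫ ω, max (Y ω - l) 0 ∂P = ∫ u in 0..1, max (quantile μ u - l) 0 := by
    have hg : AEStronglyMeasurable (fun y => max (y - l) 0) μ := by fun_prop
    rw [← integral_eq_intervalIntegral_quantile μ hg, integral_map hY.aemeasurable hg]
  have h1α : 0 < 1 - α := sub_pos.2 hα.2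
  simp only [CVaR, hVaR, hE]
  refine ⟨fun l => ?_, ?_⟩
  · calc _ ≤ (1 - α)⁻¹ * ((1 - α) * l + ∫ u in 0..1, max (quantile μ u - l) 0) := by
          gcongr
          exact intervalIntegral_le_add_intervalIntegral_max_sub hq (Ioo_subset_Icc_self hα) l
      _ = _ := by field_simp
  · rw [intervalIntegral_eq_add_intervalIntegral_max_sub_of_monotoneOn hq
      (monotoneOn_quantile μ) hα]
    field_simp

/-- Rockafellar–Uryasev representation: `CVaR_α(Y) ≤ λ + (1/(1−α)) E[(Y − λ)₊]` for every
`λ`, with equality at `λ = VaR_α(Y)`; hence the minimum over `λ` equals `CVaR_α(Y)`. -/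
theorem cvar_rockafellar_uryasev {Ω : Type*} [MeasurableSpace Ω] (P : Measure Ω)
    [IsProbabilityMeasure P] (α : ℝ) (hα : α ∈ Set.Ioo (0:ℝ) 1)
    (Y : Ω → ℝ) (hYm : Measurable Y) (hY : Integrable Y P) :
    (∀ l : ℝ, CVaR P Y α ≤ l + (1 - α)⁻¹ * ∫ ω, max (Y ω - l) 0 ∂P) ∧
    CVaR P Y α = VaR P Y α + (1 - α)⁻¹ * ∫ ω, max (Y ω - VaR P Y α) 0 ∂P :=
  cvar_rockafellar_uryasev_general P α hα Y hY
end

section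
/- Let (Ω, 𝔉, P) be a probability space, α ∈ (0,1), and let Y be an integrable real-valued random variable. Then the conditional value-at-risk admits the dual representation CVaR_α(Y) = sup { E[Y ξ] : ξ : Ω → ℝ measurable, 0 ≤ ξ ≤ 1/(1−α) almost surely, E[ξ] = 1 }. -/
open MeasureTheory

/-! The quantile transform `u ↦ VaR_u(Y)` carries Lebesgue measure on `(0, 1)` to the law of `Y`.
With `q = VaR_α(Y)` it turns `∫_α^1 (VaR_u(Y) - q) du` into `E[(Y - q)⁺]`, which gives the
Rockafellar–Uryasev formula `CVaR_α(Y) = q + E[(Y - q)⁺] / (1 - α)`. For an admissible density `ξ`,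
`E[Yξ] = q + E[(Y - q)ξ] ≤ q + E[(Y - q)⁺] / (1 - α)`; equality holds for `ξ = (1 - α)⁻¹` on
`{Y > q}` plus a suitable constant on the atom `{Y = q}`, which exists because
`P(Y > q) ≤ 1 - α ≤ P(Y ≥ q)`. -/

open Set Filter ProbabilityTheory

theorem StieltjesFunction.csInf_setOf_le_le_iff (f : StieltjesFunction ℝ) {u t : ℝ}
    (hne : {x | u ≤ f x}.Nonempty) (hlow : ∃ x, f x < u) :
    sInf {x | u ≤ f x} ≤ t ↔ u ≤ f t := by
  obtain ⟨x₀, hx₀⟩ := hlow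
  have hbdd : BddBelow {x | u ≤ f x} :=
    ⟨x₀, fun x hx => (f.mono.reflect_lt (hx₀.trans_le hx)).le⟩
  refine ⟨fun h => le_trans ?_ (f.mono h), fun h => csInf_le hbdd h⟩
  -- right continuity puts the infimum itself into the set
  refine ge_of_tendsto ((f.right_continuous _).mono Ioi_subset_Ici_self) ?_
  filter_upwards [self_mem_nhdsWithin] with x hx
  obtain ⟨y, hy, hyx⟩ := exists_lt_of_csInf_lt hne hx
  exact hy.trans (f.mono hyx.le)

theorem ProbabilityTheory.csInf_setOf_le_cdf_le_iff (μ : Measure ℝ) [IsProbabilityMeasure μ]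
    {u t : ℝ} (hu : u ∈ Ioo 0 1) :
    sInf {x | u ≤ cdf μ x} ≤ t ↔ u ≤ cdf μ t :=
  (cdf μ).csInf_setOf_le_le_iff
    (((tendsto_cdf_atTop μ).eventually (eventually_ge_nhds hu.2)).exists)
    (((tendsto_cdf_atBot μ).eventually (eventually_lt_nhds hu.1)).exists)

section Quantile

variable {Ω : Type*} [MeasurableSpace Ω] {P : Measure Ω} [IsProbabilityMeasure P] {Y : Ω → ℝ}

theorem measure_le_toReal_eq_cdf_map (hY : AEMeasurable Y P) (t : ℝ) :
    (P {ω | Y ω ≤ t}).toReal = cdf (P.map Y) t := by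
  have := Measure.isProbabilityMeasure_map hY
  rw [cdf_eq_real, measureReal_def, Measure.map_apply_of_aemeasurable hY measurableSet_Iic]
  rfl

theorem VaR_le_iff (hY : AEMeasurable Y P) {u t : ℝ} (hu : u ∈ Ioo 0 1) :
    VaR P Y u ≤ t ↔ u ≤ (P {ω | Y ω ≤ t}).toReal := by
  have := Measure.isProbabilityMeasure_map hY
  simp only [VaR, measure_le_toReal_eq_cdf_map hY]
  exact csInf_setOf_le_cdf_le_iff _ hu

theorem VaR_monotoneOn (hY : AEMeasurable Y P) : MonotoneOn (VaR P Y) (Ioo 0 1) :=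
  fun _ hu _ hv huv => (VaR_le_iff hY hu).2 (huv.trans ((VaR_le_iff hY hv).1 le_rfl))

theorem aemeasurable_VaR (hY : AEMeasurable Y P) :
    AEMeasurable (VaR P Y) (volume.restrict (Ioo 0 1)) :=
  aemeasurable_restrict_of_monotoneOn measurableSet_Ioo (VaR_monotoneOn hY)

theorem map_VaR_volume_Ioo (hY : AEMeasurable Y P) :
    (volume.restrict (Ioo 0 1)).map (VaR P Y) = P.map Y := by
  have := Measure.isProbabilityMeasure_map hY
  symm
  refine Measure.ext_of_Iic _ _ fun t => ?_
  rw [Measure.map_apply_of_aemeasurable hY measurableSet_Iic,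
    Measure.map_apply_of_aemeasurable (aemeasurable_VaR hY) measurableSet_Iic,
    Measure.restrict_apply' measurableSet_Ioo, ← ENNReal.ofReal_toReal (measure_ne_top P _)]
  set F := (P {ω | Y ω ≤ t}).toReal
  have hF1 : F ≤ 1 := ENNReal.toReal_le_of_le_ofReal zero_le_one (by simpa using prob_le_one)
  refine le_antisymm ?_ ?_
  · calc ENNReal.ofReal F = volume (Ioo 0 F) := by simp
      _ ≤ volume (VaR P Y ⁻¹' Iic t ∩ Ioo 0 1) := measure_mono fun u hu =>
          ⟨(VaR_le_iff hY ⟨hu.1, hu.2.trans_le hF1⟩).2 hu.2.le, hu.1, hu.2.trans_le hF1⟩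
  · calc volume (VaR P Y ⁻¹' Iic t ∩ Ioo 0 1) ≤ volume (Icc 0 F) := measure_mono
          fun u ⟨hut, hu⟩ => ⟨hu.1.le, (VaR_le_iff hY hu).1 hut⟩
      _ = ENNReal.ofReal F := by simp

theorem measure_preimage_eq_volume_VaR (hY : AEMeasurable Y P) {s : Set ℝ}
    (hs : MeasurableSet s) : P (Y ⁻¹' s) = volume (VaR P Y ⁻¹' s ∩ Ioo 0 1) := by
  rw [← Measure.map_apply_of_aemeasurable hY hs, ← map_VaR_volume_Ioo hY,
    Measure.map_apply_of_aemeasurable (aemeasurable_VaR hY) hs,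
    Measure.restrict_apply' measurableSet_Ioo]

theorem integral_comp_VaR (hY : AEMeasurable Y P) {h : ℝ → ℝ}
    (hh : AEStronglyMeasurable h (P.map Y)) :
    ∫ u in Ioo 0 1, h (VaR P Y u) = ∫ ω, h (Y ω) ∂P := by
  rw [← integral_map (aemeasurable_VaR hY) (by rwa [map_VaR_volume_Ioo hY]),
    map_VaR_volume_Ioo hY, integral_map hY hh]

theorem integrableOn_VaR (hY : Integrable Y P) : IntegrableOn (VaR P Y) (Ioo 0 1) := by
  have hYm := hY.aemeasurable
  have hid : Integrable id (P.map Y) :=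
    (integrable_map_measure aestronglyMeasurable_id hYm).2 hY
  rw [← map_VaR_volume_Ioo hYm] at hid
  exact (integrable_map_measure aestronglyMeasurable_id (aemeasurable_VaR hYm)).1 hid

end Quantile

section RockafellarUryasev

variable {Ω : Type*} [MeasurableSpace Ω] {P : Measure Ω} [IsProbabilityMeasure P] {Y : Ω → ℝ}
  {α : ℝ}

theorem integral_VaR_sub_VaR (hY : Integrable Y P) (hα : α ∈ Ioo 0 1) :
    ∫ u in Ioo α 1, (VaR P Y u - VaR P Y α) = ∫ ω, max (Y ω - VaR P Y α) 0 ∂P := by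
  have hYm := hY.aemeasurable
  set q := VaR P Y α
  rw [← integral_comp_VaR hYm (h := fun x => max (x - q) 0)
      (by fun_prop : Continuous fun x : ℝ => max (x - q) 0).aestronglyMeasurable,
    ← inter_eq_right.2 (Ioo_subset_Ioo_left hα.1.le), ← setIntegral_indicator measurableSet_Ioo]
  refine setIntegral_congr_fun measurableSet_Ioo fun u hu => ?_
  by_cases hαu : α < u
  · rw [indicator_of_mem (show u ∈ Ioo α 1 from ⟨hαu, hu.2⟩),
      max_eq_left (sub_nonneg.2 (VaR_monotoneOn hYm hα hu hαu.le))]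
  · rw [indicator_of_notMem fun h => hαu h.1,
      max_eq_right (sub_nonpos.2 (VaR_monotoneOn hYm hu hα (not_lt.1 hαu)))]

theorem CVaR_eq_VaR_add (hY : Integrable Y P) (hα : α ∈ Ioo 0 1) :
    CVaR P Y α = VaR P Y α + (1 - α)⁻¹ * ∫ ω, max (Y ω - VaR P Y α) 0 ∂P := by
  have hint : IntegrableOn (VaR P Y) (Ioo α 1) :=
    (integrableOn_VaR hY).mono_set (Ioo_subset_Ioo_left hα.1.le)
  have h1α : (1 : ℝ) - α ≠ 0 := sub_ne_zero.2 hα.2.ne'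
  rw [CVaR, intervalIntegral.integral_of_le hα.2.le, integral_Ioc_eq_integral_Ioo,
    ← integral_VaR_sub_VaR hY hα, integral_sub hint (integrableOn_const (by simp)),
    setIntegral_const, Real.volume_real_Ioo_of_le hα.2.le, smul_eq_mul]
  field_simp
  ring

theorem measureReal_VaR_lt_le (hY : AEMeasurable Y P) (hα : α ∈ Ioo 0 1) :
    P.real {ω | VaR P Y α < Y ω} ≤ 1 - α := by
  refine ENNReal.toReal_le_of_le_ofReal (sub_nonneg.2 hα.2.le) ?_
  calc P (Y ⁻¹' Ioi (VaR P Y α)) = volume (VaR P Y ⁻¹' Ioi (VaR P Y α) ∩ Ioo 0 1) :=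
        measure_preimage_eq_volume_VaR hY measurableSet_Ioi
    _ ≤ volume (Ioo α 1) := measure_mono fun u ⟨hlt, hu⟩ =>
        ⟨lt_of_not_ge fun hle => (VaR_monotoneOn hY hu hα hle).not_gt hlt, hu.2⟩
    _ = ENNReal.ofReal (1 - α) := Real.volume_Ioo

theorem one_sub_le_measureReal_VaR_le (hY : AEMeasurable Y P) (hα : α ∈ Ioo 0 1) :
    1 - α ≤ P.real {ω | VaR P Y α ≤ Y ω} := by
  refine (ENNReal.ofReal_le_iff_le_toReal (measure_ne_top _ _)).1 ?_
  calc ENNReal.ofReal (1 - α) = volume (Ico α 1) := Real.volume_Ico.symm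
    _ ≤ volume (VaR P Y ⁻¹' Ici (VaR P Y α) ∩ Ioo 0 1) := measure_mono fun u hu =>
        ⟨VaR_monotoneOn hY hα ⟨hα.1.trans_le hu.1, hu.2⟩ hu.1, hα.1.trans_le hu.1, hu.2⟩
    _ = P (Y ⁻¹' Ici (VaR P Y α)) := (measure_preimage_eq_volume_VaR hY measurableSet_Ici).symm

end RockafellarUryasev

section Duality

variable {Ω : Type*} [MeasurableSpace Ω] {P : Measure Ω} [IsFiniteMeasure P] {Y ξ : Ω → ℝ}
  {c : ℝ}

theorem integral_mul_eq_add_integral_sub_mul (hY : Integrable Y P)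
    (hξm : AEStronglyMeasurable ξ P) (hξb : ∀ᵐ ω ∂P, ‖ξ ω‖ ≤ c) (hξ1 : ∫ ω, ξ ω ∂P = 1) (q : ℝ) :
    ∫ ω, Y ω * ξ ω ∂P = q + ∫ ω, (Y ω - q) * ξ ω ∂P := by
  simp_rw [sub_mul]
  rw [integral_sub (hY.mul_bdd hξm hξb) ((Integrable.of_bound hξm c hξb).const_mul q),
    integral_const_mul, hξ1]
  ring

theorem integral_mul_le_add_integral_max_sub (hY : Integrable Y P)
    (hξm : AEStronglyMeasurable ξ P) (hξb : ∀ᵐ ω ∂P, 0 ≤ ξ ω ∧ ξ ω ≤ c)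
    (hξ1 : ∫ ω, ξ ω ∂P = 1) (q : ℝ) :
    ∫ ω, Y ω * ξ ω ∂P ≤ q + c * ∫ ω, max (Y ω - q) 0 ∂P := by
  have hξbound : ∀ᵐ ω ∂P, ‖ξ ω‖ ≤ c := hξb.mono fun ω h => by
    rw [Real.norm_of_nonneg h.1]; exact h.2
  rw [integral_mul_eq_add_integral_sub_mul hY hξm hξbound hξ1 q, ← integral_const_mul]
  refine add_le_add le_rfl (integral_mono_ae ((hY.sub (integrable_const q)).mul_bdd hξm hξbound)
    ((hY.sub (integrable_const q)).pos_part.const_mul c) ?_)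
  filter_upwards [hξb] with ω ⟨h0, hc⟩
  rcases le_total 0 (Y ω - q) with h | h
  · rw [max_eq_left h]; nlinarith
  · rw [max_eq_right h]; nlinarith

theorem exists_density_integral_mul_eq (hYm : Measurable Y) (hY : Integrable Y P) {p q : ℝ}
    (hp : 0 < p) (hgt : P.real {ω | q < Y ω} ≤ p) (hge : p ≤ P.real {ω | q ≤ Y ω}) :
    ∃ ξ : Ω → ℝ, Measurable ξ ∧ (∀ᵐ ω ∂P, 0 ≤ ξ ω ∧ ξ ω ≤ p⁻¹) ∧ ∫ ω, ξ ω ∂P = 1 ∧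
      ∫ ω, Y ω * ξ ω ∂P = q + p⁻¹ * ∫ ω, max (Y ω - q) 0 ∂P := by
  set A := {ω | q < Y ω}
  set B := {ω | Y ω = q}
  have hA : MeasurableSet A := measurableSet_lt measurable_const hYm
  have hB : MeasurableSet B := hYm (measurableSet_singleton q)
  have hAB : P.real {ω | q ≤ Y ω} = P.real A + P.real B := by
    rw [← measureReal_union (disjoint_left.2 fun ω hωA hωB => hωA.ne' hωB) hB]
    congr 1
    ext ω
    show q ≤ Y ω ↔ q < Y ω ∨ Y ω = q
    exact le_iff_lt_or_eq.trans (or_congr Iff.rfl eq_comm)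
  set κ := (p - P.real A) / P.real B
  have hκ0 : 0 ≤ κ := div_nonneg (sub_nonneg.2 hgt) measureReal_nonneg
  have hκ1 : κ ≤ 1 := div_le_one_of_le₀ (by linarith) measureReal_nonneg
  have hκ : P.real A + κ * P.real B = p := by
    rcases eq_or_ne (P.real B) 0 with h | h
    · rw [h, mul_zero]; linarith
    · rw [div_mul_cancel₀ _ h]; ring
  set ξ := fun ω => A.indicator (fun _ => p⁻¹) ω + B.indicator (fun _ => p⁻¹ * κ) ω
  have hξ : ∀ ω, (0 ≤ ξ ω ∧ ξ ω ≤ p⁻¹) ∧ (Y ω - q) * ξ ω = p⁻¹ * max (Y ω - q) 0 := by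
    intro ω
    have hp' : 0 < p⁻¹ := inv_pos.2 hp
    rcases lt_trichotomy q (Y ω) with h | h | h
    · simp [ξ, A, B, h, h.ne', max_eq_left (sub_nonneg.2 h.le), mul_comm, hp'.le]
    · simp [ξ, A, B, h, mul_nonneg hp'.le hκ0, mul_le_of_le_one_right hp'.le hκ1]
    · simp [ξ, A, B, h.not_gt, h.ne, max_eq_right (sub_nonpos.2 h.le), hp'.le]
  have hξm : Measurable ξ :=
    (measurable_const.indicator hA).add (measurable_const.indicator hB)
  have hξ1 : ∫ ω, ξ ω ∂P = 1 := by
    rw [integral_add ((integrable_const _).indicator hA) ((integrable_const _).indicator hB),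
      integral_indicator_const _ hA, integral_indicator_const _ hB, smul_eq_mul, smul_eq_mul]
    calc P.real A * p⁻¹ + P.real B * (p⁻¹ * κ) = (P.real A + κ * P.real B) * p⁻¹ := by ring
      _ = 1 := by rw [hκ, mul_inv_cancel₀ hp.ne']
  refine ⟨ξ, hξm, ae_of_all _ fun ω => (hξ ω).1, hξ1, ?_⟩
  have hξbound : ∀ᵐ ω ∂P, ‖ξ ω‖ ≤ p⁻¹ := ae_of_all _ fun ω => by
    rw [Real.norm_of_nonneg (hξ ω).1.1]; exact (hξ ω).1.2
  rw [integral_mul_eq_add_integral_sub_mul hY hξm.aestronglyMeasurable hξbound hξ1 q,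
    ← integral_const_mul]
  simp_rw [fun ω => (hξ ω).2]

end Duality

/-- Dual representation of the conditional value-at-risk:
`CVaR_α(Y) = sup { E[Yξ] : 0 ≤ ξ ≤ 1/(1−α) a.s., E[ξ] = 1 }`. -/
theorem cvar_dual_representation {Ω : Type*} [MeasurableSpace Ω] (P : Measure Ω)
    [IsProbabilityMeasure P] (α : ℝ) (hα : α ∈ Set.Ioo (0:ℝ) 1)
    (Y : Ω → ℝ) (hYm : Measurable Y) (hY : Integrable Y P) :
    IsLUB {r : ℝ | ∃ ξ : Ω → ℝ, Measurable ξ ∧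
      (∀ᵐ ω ∂P, 0 ≤ ξ ω ∧ ξ ω ≤ (1 - α)⁻¹) ∧
      (∫ ω, ξ ω ∂P) = 1 ∧ r = ∫ ω, Y ω * ξ ω ∂P}
      (CVaR P Y α) := by
  rw [CVaR_eq_VaR_add hY hα]
  refine IsGreatest.isLUB ⟨?_, ?_⟩
  · obtain ⟨ξ, hξm, hξb, hξ1, hYξ⟩ := exists_density_integral_mul_eq hYm hY (sub_pos.2 hα.2)
      (measureReal_VaR_lt_le hYm.aemeasurable hα)
      (one_sub_le_measureReal_VaR_le hYm.aemeasurable hα)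
    exact ⟨ξ, hξm, hξb, hξ1, hYξ.symm⟩
  · rintro _ ⟨ξ, hξm, hξb, hξ1, rfl⟩
    exact integral_mul_le_add_integral_max_sub hY hξm.aestronglyMeasurable hξb hξ1 _
end
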